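/- Let G : ℝ^k → ℓ²(ℕ; ℝ) be a (k,d)-generalized generative network with layer widths 2 ≤ k = k_0 ≤ k_1 ≤ ⋯ ≤ k_d. Then there exist a natural number N with N ≤ (2e·k_d/k)^{kd} and convex cones C_1, …, C_N ⊆ ℓ²(ℕ; ℝ), each contained in a linear subspace of dimension at most k, such that the range of G equals C_1 ∪ ⋯ ∪ C_N. -/

import Mathlib

noncomputable section

/-- `ℓ²(ℕ; ℝ)`, the Hilbert space of square-summable real sequences. -/
abbrev HR := lp (fun _ : ℕ => ℝ) 2

/-- The composition of the first `d` layers of a ReLU network with layer widths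
`kf 0, kf 1, …` and weight matrices `Wmat i : ℝ^{kf (i+1) × kf i}`:
`reluLayers kf Wmat d z = σ(W⁽ᵈ⁾ σ(⋯ σ(W⁽¹⁾ z)⋯))` where `σ` is the entrywise
ReLU `t ↦ max t 0`. -/
def reluLayers (kf : ℕ → ℕ)
    (Wmat : ∀ i : ℕ, Matrix (Fin (kf (i + 1))) (Fin (kf i)) ℝ) :
    ∀ d : ℕ, (Fin (kf 0) → ℝ) → (Fin (kf d) → ℝ)
  | 0 => id
  | d + 1 => fun z j => max ((Wmat d).mulVec (reluLayers kf Wmat d z) j) 0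

/-!
On the set of inputs with a given activation pattern the network is a linear map, and this set
is a convex cone; so the range is the union of the images of these cones, each inside the range
of a linear map on `ℝ^k`. The patterns are refined one layer at a time: the range of a linear map
`ℝ^k → ℝ^m` meets at most `∑_{j ≤ k} (m choose j) ≤ (e m / k)^k` sign orthants, because the
orthants met shatter no set of more than `k` coordinates (Sauer–Shelah).
-/

open Finset Module Real

theorem sum_Iic_choose_le_exp_mul_div_pow {k m : ℕ} (hkm : k ≤ m) :
    ∑ j ∈ Iic k, (m.choose j : ℝ) ≤ (exp 1 * m / k) ^ k := by
  rcases k.eq_zero_or_pos with rfl | hk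
  · simp [← Nat.range_succ_eq_Iic]
  have hm : (0 : ℝ) < m := by exact_mod_cast hk.trans_le hkm
  set t : ℝ := k / m with ht
  have ht0 : 0 < t := by positivity
  have ht1 : t ≤ 1 := div_le_one_of_le₀ (by exact_mod_cast hkm) hm.le
  have key : (∑ j ∈ Iic k, (m.choose j : ℝ)) * t ^ k ≤ exp 1 ^ k := calc
    _ = ∑ j ∈ Iic k, (m.choose j : ℝ) * t ^ k := sum_mul _ _ _
    _ ≤ ∑ j ∈ Iic k, (m.choose j : ℝ) * t ^ j := by
      refine sum_le_sum fun j hj => ?_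
      exact mul_le_mul_of_nonneg_left (pow_le_pow_of_le_one ht0.le ht1 (mem_Iic.mp hj))
        (by positivity)
    _ ≤ ∑ j ∈ range (m + 1), (m.choose j : ℝ) * t ^ j := by
      rw [Nat.range_succ_eq_Iic]
      exact sum_le_sum_of_subset_of_nonneg (Iic_subset_Iic.mpr hkm) fun _ _ _ => by positivity
    _ = (t + 1) ^ m := by rw [add_pow]; simp only [one_pow, mul_one, mul_comm]
    _ ≤ exp t ^ m := by gcongr; exact add_one_le_exp t
    _ = exp 1 ^ k := by rw [← exp_nat_mul, ← exp_nat_mul, ht]; field_simp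
  calc _ ≤ exp 1 ^ k / t ^ k := (le_div_iff₀ (by positivity)).mpr key
    _ = _ := by rw [← div_pow, ht]; field_simp

theorem prod_sum_Iic_choose_le_pow {k K d : ℕ} {w : ℕ → ℕ} (hk : k ≤ K) (hw : ∀ m < d, w m ≤ K) :
    ((∏ m ∈ range d, ∑ j ∈ Iic k, (w m).choose j : ℕ) : ℝ) ≤ (exp 1 * K / k) ^ (k * d) := by
  calc _ = ∏ m ∈ range d, ∑ j ∈ Iic k, ((w m).choose j : ℝ) := by push_cast; rfl
    _ ≤ ∏ _m ∈ range d, (exp 1 * K / k) ^ k := by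
      refine prod_le_prod (fun _ _ => by positivity) fun m hm => ?_
      calc ∑ j ∈ Iic k, ((w m).choose j : ℝ) ≤ ∑ j ∈ Iic k, (K.choose j : ℝ) := by
            gcongr with j
            exact hw m (mem_range.mp hm)
        _ ≤ _ := sum_Iic_choose_le_exp_mul_div_pow hk
    _ = _ := by rw [prod_const, card_range, pow_mul]

section SignPatterns

variable {ι : Type*}

def signOrthant (S : Finset ι) : ConvexCone ℝ (ι → ℝ) where
  carrier := {y | ∀ j, 0 ≤ y j ↔ j ∈ S}
  smul_mem' c hc y hy j := by simpa [mul_nonneg_iff_of_pos_left hc] using hy j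
  add_mem' y hy y' hy' j := by
    by_cases hj : j ∈ S
    · simpa [hj] using add_nonneg ((hy j).2 hj) ((hy' j).2 hj)
    · simpa [hj] using add_neg (not_le.1 (mt (hy j).1 hj)) (not_le.1 (mt (hy' j).1 hj))

theorem mem_signOrthant {S : Finset ι} {y : ι → ℝ} : y ∈ signOrthant S ↔ ∀ j, 0 ≤ y j ↔ j ∈ S :=
  Iff.rfl

theorem relu_eqOn_signOrthant [DecidableEq ι] (S : Finset ι) :
    Set.EqOn (fun y j => max (y j) 0)
      (LinearMap.pi fun j => if j ∈ S then LinearMap.proj (R := ℝ) j else 0)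
      (signOrthant S : Set (ι → ℝ)) := by
  intro y hy
  funext j
  by_cases hj : j ∈ S
  · simp [hj, (hy j).2 hj]
  · simp [hj, (not_le.1 (mt (hy j).1 hj)).le]

variable [Fintype ι] {E : Type*} [AddCommGroup E] [Module ℝ E]

theorem mem_signOrthant_filter (y : ι → ℝ) : y ∈ signOrthant (univ.filter fun j => 0 ≤ y j) := by
  simp [mem_signOrthant]

open scoped Classical in
def signPatterns (L : E →ₗ[ℝ] ι → ℝ) : Finset (Finset ι) :=
  univ.filter fun S => ∃ z, L z ∈ signOrthant S

theorem mem_signPatterns {L : E →ₗ[ℝ] ι → ℝ} {S : Finset ι} :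
    S ∈ signPatterns L ↔ ∃ z, L z ∈ signOrthant S := by
  simp [signPatterns]

/-- The functionals `z ↦ L z j`, `j ∈ Y`, are linearly independent: given a relation
`∑ g j • L _ j = 0`, evaluate it at a point whose sign pattern on `Y` is `{j | g j ≤ 0}`;
every term `g j * L z j` is then `≤ 0`, so none can have `g j > 0`. -/
theorem card_le_finrank_of_shatters [DecidableEq ι] [FiniteDimensional ℝ E] {L : E →ₗ[ℝ] ι → ℝ}
    {Y : Finset ι} (hY : (signPatterns L).Shatters Y) : #Y ≤ finrank ℝ E := by
  let ψ : ι → E →ₗ[ℝ] ℝ := fun j => LinearMap.proj j ∘ₗ L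
  have nonpos : ∀ g : ι → ℝ, ∑ j ∈ Y, g j • ψ j = 0 → ∀ j ∈ Y, g j ≤ 0 := by
    intro g hg
    obtain ⟨S, hS, hYS⟩ := hY (filter_subset (fun j => g j ≤ 0) Y)
    obtain ⟨z, hz⟩ := mem_signPatterns.1 hS
    have hsign : ∀ j ∈ Y, 0 ≤ L z j ↔ g j ≤ 0 := fun j hj => by
      simpa [hj, hz j] using Finset.ext_iff.1 hYS j
    have hpos : ∀ j ∈ Y, 0 < g j → g j * L z j < 0 := fun j hj hgj =>
      mul_neg_of_pos_of_neg hgj (not_le.1 (mt (hsign j hj).1 (not_le.2 hgj)))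
    have hterm : ∀ j ∈ Y, g j * L z j ≤ 0 := fun j hj => by
      rcases le_or_gt (g j) 0 with hgj | hgj
      · exact mul_nonpos_of_nonpos_of_nonneg hgj ((hsign j hj).2 hgj)
      · exact (hpos j hj hgj).le
    have hsum : ∑ j ∈ Y, g j * L z j = 0 := by simpa [ψ] using LinearMap.congr_fun hg z
    intro j hj
    by_contra! hgj
    exact (hpos j hj hgj).ne ((sum_eq_zero_iff_of_nonpos hterm).1 hsum j hj)
  have hind : LinearIndepOn ℝ ψ (Y : Set ι) := by
    refine linearIndepOn_finset_iff.2 fun g hg j hj => le_antisymm (nonpos g hg j hj) ?_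
    simpa using nonpos (-g) (by simp [fun j => neg_smul (g j) (ψ j), hg]) j hj
  simpa using hind.fintype_card_le_finrank

theorem card_signPatterns_le [DecidableEq ι] [FiniteDimensional ℝ E] (L : E →ₗ[ℝ] ι → ℝ) :
    #(signPatterns L) ≤ ∑ j ∈ Iic (finrank ℝ E), (Fintype.card ι).choose j :=
  (card_le_card_shatterer _).trans <| card_shatterer_le_sum_vcDim.trans <|
    sum_le_sum_of_subset <| Iic_subset_Iic.2 <|
      Finset.sup_le fun _ hY => card_le_finrank_of_shatters (mem_shatterer.1 hY)

end SignPatterns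

section PiecewiseLinear

variable {E F G : Type*} [AddCommGroup E] [Module ℝ E] [AddCommGroup F] [Module ℝ F]
  [AddCommGroup G] [Module ℝ G]

def IsPiecewiseLinearOnCones (N : ℕ) (f : E → F) : Prop :=
  ∃ (ι : Type) (_ : Fintype ι) (C : ι → ConvexCone ℝ E) (L : ι → E →ₗ[ℝ] F),
    Fintype.card ι ≤ N ∧ (⋃ i, (C i : Set E)) = Set.univ ∧ ∀ i, Set.EqOn f (L i) (C i)

theorem LinearMap.isPiecewiseLinearOnCones (L : E →ₗ[ℝ] F) : IsPiecewiseLinearOnCones 1 L :=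
  ⟨Unit, inferInstance, fun _ => ⊤, fun _ => L, by simp, Set.iUnion_const _,
    fun _ => Set.eqOn_refl _ _⟩

theorem IsPiecewiseLinearOnCones.comp {N M : ℕ} {f : E → F} {g : F → G}
    (hf : IsPiecewiseLinearOnCones N f)
    (hg : ∀ L : E →ₗ[ℝ] F, IsPiecewiseLinearOnCones M (g ∘ L)) :
    IsPiecewiseLinearOnCones (N * M) (g ∘ f) := by
  obtain ⟨ι, _, C, L, hcard, hcover, hfL⟩ := hf
  choose κ _ D L' hcard' hcover' hgL' using fun i => hg (L i)
  refine ⟨Σ i, κ i, inferInstance, fun p => C p.1 ⊓ D p.1 p.2, fun p => L' p.1 p.2, ?_, ?_, ?_⟩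
  · calc Fintype.card (Σ i, κ i) = ∑ i, Fintype.card (κ i) := Fintype.card_sigma
      _ ≤ ∑ _i : ι, M := sum_le_sum fun i _ => hcard' i
      _ = Fintype.card ι * M := by simp
      _ ≤ N * M := Nat.mul_le_mul_right _ hcard
  · refine Set.eq_univ_of_forall fun z => ?_
    obtain ⟨i, hi⟩ := Set.mem_iUnion.1 (hcover ▸ Set.mem_univ z)
    obtain ⟨k, hk⟩ := Set.mem_iUnion.1 (hcover' i ▸ Set.mem_univ z)
    exact Set.mem_iUnion.2 ⟨⟨i, k⟩, hi, hk⟩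
  · rintro ⟨i, k⟩ z ⟨hi, hk⟩
    simpa [hfL i hi] using hgL' i k hk

theorem IsPiecewiseLinearOnCones.exists_range_eq_iUnion [FiniteDimensional ℝ E] {N : ℕ}
    {f : E → F} (hf : IsPiecewiseLinearOnCones N f) :
    ∃ n ≤ N, ∃ C : Fin n → ConvexCone ℝ F,
      (∀ i, ∃ V : Submodule ℝ F, FiniteDimensional ℝ V ∧ finrank ℝ V ≤ finrank ℝ E ∧
        (C i : Set F) ⊆ V) ∧ Set.range f = ⋃ i, (C i : Set F) := by
  obtain ⟨ι, _, C, L, hcard, hcover, hfL⟩ := hf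
  let e := Fintype.equivFin ι
  refine ⟨Fintype.card ι, hcard, fun i => (C (e.symm i)).map (L (e.symm i)), fun i =>
    ⟨LinearMap.range (L (e.symm i)), inferInstance, LinearMap.finrank_range_le _, ?_⟩, ?_⟩
  · rintro _ ⟨z, -, rfl⟩
    exact LinearMap.mem_range_self _ z
  · rw [← Set.image_univ, ← hcover, Set.image_iUnion]
    simp only [ConvexCone.coe_map]
    rw [Function.Surjective.iUnion_comp e.symm.surjective (fun i => (L i) '' (C i))]
    exact Set.iUnion_congr fun i => (hfL i).image_eq

theorem isPiecewiseLinearOnCones_relu_comp [FiniteDimensional ℝ E] {ι : Type} [Fintype ι]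
    [DecidableEq ι] (L : E →ₗ[ℝ] ι → ℝ) :
    IsPiecewiseLinearOnCones (∑ j ∈ Iic (finrank ℝ E), (Fintype.card ι).choose j)
      (fun z j => max (L z j) 0) := by
  refine ⟨signPatterns L, inferInstance, fun S => (signOrthant S.1).comap L,
    fun S => (LinearMap.pi fun j => if j ∈ S.1 then LinearMap.proj j else 0) ∘ₗ L,
    by simpa using card_signPatterns_le L, ?_, fun S z hz => relu_eqOn_signOrthant S.1 hz⟩
  refine Set.eq_univ_of_forall fun z => Set.mem_iUnion.2 ?_
  exact ⟨⟨_, mem_signPatterns.2 ⟨z, mem_signOrthant_filter (L z)⟩⟩, mem_signOrthant_filter (L z)⟩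

end PiecewiseLinear

theorem isPiecewiseLinearOnCones_reluLayers (kf : ℕ → ℕ)
    (Wmat : ∀ i : ℕ, Matrix (Fin (kf (i + 1))) (Fin (kf i)) ℝ) (n : ℕ) :
    IsPiecewiseLinearOnCones (∏ m ∈ range n, ∑ j ∈ Iic (kf 0), (kf (m + 1)).choose j)
      (reluLayers kf Wmat n) := by
  induction n with
  | zero => exact LinearMap.id.isPiecewiseLinearOnCones
  | succ n ih =>
    rw [prod_range_succ]
    refine ih.comp (g := fun y j => max ((Wmat n).mulVec y j) 0) fun L => ?_
    have h := isPiecewiseLinearOnCones_relu_comp ((Wmat n).mulVecLin ∘ₗ L)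
    rwa [finrank_fin_fun, Fintype.card_fin] at h

theorem range_generative_network_union_of_cones_general
    (d : ℕ) (kf : ℕ → ℕ)
    (hmono : ∀ i : ℕ, i < d → kf i ≤ kf (i + 1))
    (Wmat : ∀ i : ℕ, Matrix (Fin (kf (i + 1))) (Fin (kf i)) ℝ)
    (Wlin : (Fin (kf d) → ℝ) →ₗ[ℝ] HR)
    (G : (Fin (kf 0) → ℝ) → HR)
    (hG : ∀ z : Fin (kf 0) → ℝ, G z = Wlin (reluLayers kf Wmat d z)) :
    ∃ N : ℕ, (N : ℝ) ≤ (2 * Real.exp 1 * (kf d) / (kf 0)) ^ (kf 0 * d) ∧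
      ∃ C : Fin N → Set HR,
        (∀ i : Fin N,
          Convex ℝ (C i) ∧
          (∀ (c : ℝ), 0 < c → ∀ x ∈ C i, c • x ∈ C i) ∧
          ∃ V : Submodule ℝ HR, FiniteDimensional ℝ V ∧
            Module.finrank ℝ V ≤ kf 0 ∧ C i ⊆ (V : Set HR)) ∧
        Set.range G = ⋃ i : Fin N, C i := by
  have hkf : MonotoneOn kf (Set.Iic d) := monotoneOn_of_le_succ Set.ordConnected_Iic
    fun a _ _ ha => by
      rw [Order.succ_eq_add_one] at ha ⊢
      exact hmono a (Nat.lt_of_succ_le ha)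
  have hG' : G = Wlin ∘ reluLayers kf Wmat d := funext hG
  obtain ⟨N, hN, C, hC, hrange⟩ := ((isPiecewiseLinearOnCones_reluLayers kf Wmat d).comp
    fun L => (Wlin ∘ₗ L).isPiecewiseLinearOnCones).exists_range_eq_iUnion
  refine ⟨N, ?_, fun i => C i,
    fun i => ⟨(C i).convex, fun c hc x hx => (C i).smul_mem hc hx, by simpa using hC i⟩,
    hG' ▸ hrange⟩
  calc (N : ℝ) ≤ ((∏ m ∈ range d, ∑ j ∈ Iic (kf 0), (kf (m + 1)).choose j : ℕ) : ℝ) := by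
        exact_mod_cast hN.trans_eq (mul_one _)
    _ ≤ (exp 1 * kf d / kf 0) ^ (kf 0 * d) :=
        prod_sum_Iic_choose_le_pow (hkf (by simp) (by simp) (Nat.zero_le d))
          fun m hm => hkf (Set.mem_Iic.2 hm) Set.self_mem_Iic hm
    _ ≤ (2 * exp 1 * kf d / kf 0) ^ (kf 0 * d) := by
        gcongr
        linarith [exp_pos 1]

/-- the range of a `(k,d)`-generalized generative network
`G = W ∘ σ(W⁽ᵈ⁾ σ(⋯ σ(W⁽¹⁾ ·)⋯)) : ℝ^k → ℓ²(ℕ; ℝ)` with layer widths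
`2 ≤ k = k_0 ≤ k_1 ≤ ⋯ ≤ k_d` is a union of `N ≤ (2e·k_d/k)^{kd}` convex
cones, each contained in a linear subspace of dimension at most `k`. -/
theorem range_generative_network_union_of_cones
    (d : ℕ) (hd : 1 ≤ d) (kf : ℕ → ℕ) (hk2 : 2 ≤ kf 0)
    (hmono : ∀ i : ℕ, i < d → kf i ≤ kf (i + 1))
    (Wmat : ∀ i : ℕ, Matrix (Fin (kf (i + 1))) (Fin (kf i)) ℝ)
    (Wlin : (Fin (kf d) → ℝ) →ₗ[ℝ] HR)
    (G : (Fin (kf 0) → ℝ) → HR)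
    (hG : ∀ z : Fin (kf 0) → ℝ, G z = Wlin (reluLayers kf Wmat d z)) :
    ∃ N : ℕ, (N : ℝ) ≤ (2 * Real.exp 1 * (kf d) / (kf 0)) ^ (kf 0 * d) ∧
      ∃ C : Fin N → Set HR,
        (∀ i : Fin N,
          Convex ℝ (C i) ∧
          (∀ (c : ℝ), 0 < c → ∀ x ∈ C i, c • x ∈ C i) ∧
          ∃ V : Submodule ℝ HR, FiniteDimensional ℝ V ∧
            Module.finrank ℝ V ≤ kf 0 ∧ C i ⊆ (V : Set HR)) ∧
        Set.range G = ⋃ i : Fin N, C i :=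
  range_generative_network_union_of_cones_general d kf hmono Wmat Wlin G hG
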